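/- arXiv:2605.11921 — 6 statements merged into one kernel-verified Lean document; each statement's English description precedes it below -/
import Mathlib

section
/- For all τ, π, σ ∈ S_n and all z ∈ {1,...,n}: 1 ≤ |Rec_{τ,z}(π) ∩ Rec_{τ,z}(σ)| ≤ LCS(π,σ). -/
open scoped Classical
open Finset

noncomputable section

def oneLine {n : ℕ} (π : Equiv.Perm (Fin n)) : List (Fin n) :=
  (List.finRange n).map π

def lcs {n : ℕ} (π σ : Equiv.Perm (Fin n)) : ℕ :=
  sSup {k | ∃ l : List (Fin n), l.Sublist (oneLine π) ∧ l.Sublist (oneLine σ) ∧ l.length = k}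

/-- `RecSet τ z π` : the set of new record maxima according to `τ` obtained while scanning
the one-line representation of `π` starting from `z`. Here `a ≤_π b` means
`π⁻¹ a ≤ π⁻¹ b`. -/
def RecSet {n : ℕ} (τ : Equiv.Perm (Fin n)) (z : Fin n) (π : Equiv.Perm (Fin n)) :
    Finset (Fin n) :=
  Finset.univ.filter (fun a =>
    π⁻¹ z ≤ π⁻¹ a ∧ ∀ b : Fin n, π⁻¹ z ≤ π⁻¹ b → π⁻¹ b < π⁻¹ a → τ⁻¹ b < τ⁻¹ a)

/-!
On `Rec_{τ,z}(π)` the `π`-order and the `τ`-order agree: each record is `τ`-larger than every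
earlier entry. Hence on `Rec_{τ,z}(π) ∩ Rec_{τ,z}(σ)` the `π`-order and the `σ`-order agree, so
this set, listed in either order, is a common subsequence of `π` and `σ`; and it contains `z`.
-/

section OneLine

variable {n : ℕ}

theorem mem_oneLine (π : Equiv.Perm (Fin n)) (a : Fin n) : a ∈ oneLine π :=
  List.mem_map.2 ⟨π⁻¹ a, List.mem_finRange _, by simp⟩

theorem nodup_oneLine (π : Equiv.Perm (Fin n)) : (oneLine π).Nodup :=
  (List.nodup_finRange n).map π.injective

theorem pairwise_oneLine (π : Equiv.Perm (Fin n)) :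
    (oneLine π).Pairwise (fun a b => π⁻¹ a < π⁻¹ b) := by
  rw [oneLine, List.pairwise_map]
  exact (List.pairwise_lt_finRange n).imp fun h => by simpa using h

theorem length_filter_oneLine (π : Equiv.Perm (Fin n)) (s : Finset (Fin n)) :
    ((oneLine π).filter (· ∈ s)).length = s.card := by
  rw [← List.toFinset_card_of_nodup ((nodup_oneLine π).filter _)]
  congr 1
  ext a
  simp [mem_oneLine]

theorem filter_oneLine_eq_of_lt {π σ : Equiv.Perm (Fin n)} {s : Finset (Fin n)}
    (h : ∀ a ∈ s, ∀ b ∈ s, π⁻¹ a < π⁻¹ b → σ⁻¹ a < σ⁻¹ b) :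
    (oneLine π).filter (· ∈ s) = (oneLine σ).filter (· ∈ s) := by
  refine List.Perm.eq_of_pairwise (le := fun a b => σ⁻¹ a < σ⁻¹ b)
    (fun a b _ _ hab hba => absurd hab hba.asymm) ?_ ((pairwise_oneLine σ).filter _) ?_
  · refine ((pairwise_oneLine π).filter _).imp_of_mem fun ha hb hab => ?_
    simp only [List.mem_filter, decide_eq_true_eq] at ha hb
    exact h _ ha.2 _ hb.2 hab
  · rw [List.perm_ext_iff_of_nodup ((nodup_oneLine π).filter _) ((nodup_oneLine σ).filter _)]
    simp [mem_oneLine]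

theorem length_le_lcs {π σ : Equiv.Perm (Fin n)} {l : List (Fin n)}
    (hπ : l.Sublist (oneLine π)) (hσ : l.Sublist (oneLine σ)) : l.length ≤ lcs π σ := by
  refine le_csSup ⟨n, ?_⟩ ⟨l, hπ, hσ, rfl⟩
  rintro _ ⟨l', hl', -, rfl⟩
  simpa [oneLine] using hl'.length_le

theorem card_le_lcs_of_lt {π σ : Equiv.Perm (Fin n)} {s : Finset (Fin n)}
    (h : ∀ a ∈ s, ∀ b ∈ s, π⁻¹ a < π⁻¹ b → σ⁻¹ a < σ⁻¹ b) : s.card ≤ lcs π σ := by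
  rw [← length_filter_oneLine π s]
  refine length_le_lcs List.filter_sublist ?_
  rw [filter_oneLine_eq_of_lt h]
  exact List.filter_sublist

end OneLine

section RecSet

variable {n : ℕ} (τ : Equiv.Perm (Fin n)) (z : Fin n) (π : Equiv.Perm (Fin n))

theorem self_mem_recSet : z ∈ RecSet τ z π := by
  simp only [RecSet, mem_filter, mem_univ, true_and, le_refl]
  exact fun b hzb hbz => absurd hzb (not_le.2 hbz)

variable {τ z π}

theorem lt_iff_of_mem_recSet {a b : Fin n} (ha : a ∈ RecSet τ z π) (hb : b ∈ RecSet τ z π) :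
    π⁻¹ a < π⁻¹ b ↔ τ⁻¹ a < τ⁻¹ b := by
  simp only [RecSet, mem_filter, mem_univ, true_and] at ha hb
  refine ⟨hb.2 a ha.1, fun hτ => ?_⟩
  rcases lt_trichotomy (π⁻¹ a) (π⁻¹ b) with hπ | hπ | hπ
  · exact hπ
  · exact absurd (π⁻¹.injective hπ ▸ hτ) (lt_irrefl _)
  · exact absurd (ha.2 b hb.1 hπ) hτ.asymm

end RecSet

theorem recSet_inter_card_bounds {n : ℕ} (τ π σ : Equiv.Perm (Fin n)) (z : Fin n) :
    1 ≤ (RecSet τ z π ∩ RecSet τ z σ).card ∧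
      (RecSet τ z π ∩ RecSet τ z σ).card ≤ lcs π σ := by
  have hz : z ∈ RecSet τ z π ∩ RecSet τ z σ :=
    mem_inter.2 ⟨self_mem_recSet τ z π, self_mem_recSet τ z σ⟩
  refine ⟨card_pos.2 ⟨z, hz⟩, card_le_lcs_of_lt fun a ha b hb hab => ?_⟩
  rw [mem_inter] at ha hb
  exact (lt_iff_of_mem_recSet ha.2 hb.2).2 ((lt_iff_of_mem_recSet ha.1 hb.1).1 hab)
end
end

section
/- Let π, σ ∈ S_n with L := LCS(π,σ) ≥ 2 and let (c₁,...,c_L) be any longest common subsequence of π and σ. For 1 ≤ i < j ≤ L define I^π_{i,j} = {x : c_i ≤_π x ≤_π c_j}, I^σ_{i,j} = {x : c_i ≤_σ x ≤_σ c_j}, and W_{i,j} = |I^π_{i,j} ∪ I^σ_{i,j}|. Then the collision probability of the record-based hash family satisfies P_H(π,σ) ≥ (1/n²)·Σ_{1 ≤ i < j ≤ L} 1/W_{i,j}. -/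
open scoped Classical
open Finset

noncomputable section

/-- The hash function `h_{τ,z,a}` mapping into `{⋆} ⊔ S_n` (modeled as `Option`). -/
def recHash {n : ℕ} (τ : Equiv.Perm (Fin n)) (z a : Fin n) (π : Equiv.Perm (Fin n)) :
    Option (Equiv.Perm (Fin n)) :=
  if a ∈ RecSet τ z π then none else some π

/-- Collision probability of the record-based hash family, with `τ, z, a` drawn
independently and uniformly at random. -/
def recCollProb {n : ℕ} (π σ : Equiv.Perm (Fin n)) : ℝ :=
  (∑ τ : Equiv.Perm (Fin n), ∑ z : Fin n, ∑ a : Fin n,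
      if recHash τ z a π = recHash τ z a σ then (1 : ℝ) else 0) /
    (Fintype.card (Equiv.Perm (Fin n)) * n * n)

/-- The interval `I^π_{i,j} = {x : c_i ≤_π x ≤_π c_j}`. -/
def interval {n L : ℕ} (π : Equiv.Perm (Fin n)) (c : Fin L → Fin n) (i j : Fin L) :
    Finset (Fin n) :=
  Finset.univ.filter (fun x => π⁻¹ (c i) ≤ π⁻¹ x ∧ π⁻¹ x ≤ π⁻¹ (c j))
/-!
For `i < j`, a permutation `τ` under which `c_j` is the `τ`-largest element of
`W = I^π_{i,j} ∪ I^σ_{i,j}` makes `c_j` a record when scanning either `π` or `σ` from `c_i`, so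
`h_{τ,c_i,c_j}` sends both to `⋆`. By symmetry every element of `W` is the `τ`-largest one for
exactly `|S_n| / |W|` permutations `τ`, and distinct pairs `(i, j)` give distinct choices
`(z, a) = (c_i, c_j)`, since `c` is injective.
-/

namespace Equiv.Perm

variable {α : Type*} [Fintype α] [LinearOrder α]

def permsMaxAt (S : Finset α) (a : α) : Finset (Perm α) :=
  univ.filter fun τ => ∀ b ∈ S, b ≠ a → τ⁻¹ b < τ⁻¹ a

theorem mem_permsMaxAt {S : Finset α} {a : α} {τ : Perm α} :
    τ ∈ permsMaxAt S a ↔ ∀ b ∈ S, b ≠ a → τ⁻¹ b < τ⁻¹ a := by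
  simp [permsMaxAt]

theorem swap_mul_mem_permsMaxAt {S : Finset α} {a x : α} (ha : a ∈ S) (hxa : x ≠ a)
    {τ : Perm α} (hτ : τ ∈ permsMaxAt S x) : swap x a * τ ∈ permsMaxAt S a := by
  rw [mem_permsMaxAt] at hτ ⊢
  intro b hb hba
  simp only [mul_inv_rev, swap_inv, mul_apply, swap_apply_right]
  rcases eq_or_ne b x with rfl | hbx
  · rw [swap_apply_left]
    exact hτ a ha hxa.symm
  · rw [swap_apply_of_ne_of_ne hbx hba]
    exact hτ b hb hbx

theorem card_permsMaxAt_eq {S : Finset α} {a x : α} (ha : a ∈ S) (hx : x ∈ S) :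
    #(permsMaxAt S x) = #(permsMaxAt S a) := by
  rcases eq_or_ne x a with rfl | hxa
  · rfl
  refine card_nbij' (swap x a * ·) (swap x a * ·)
    (fun τ hτ => swap_mul_mem_permsMaxAt ha hxa hτ) (fun τ hτ => ?_)
    (fun τ _ => by simp [← mul_assoc]) (fun τ _ => by simp [← mul_assoc])
  simpa [swap_comm] using swap_mul_mem_permsMaxAt hx hxa.symm hτ

theorem biUnion_permsMaxAt {S : Finset α} (hS : S.Nonempty) :
    S.biUnion (permsMaxAt S) = univ := by
  refine eq_univ_of_forall fun τ => ?_
  obtain ⟨x, hx, hmax⟩ := S.exists_max_image (fun b => τ⁻¹ b) hS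
  exact mem_biUnion.2 ⟨x, hx, mem_permsMaxAt.2 fun b hb hbx =>
    (hmax b hb).lt_of_ne fun h => hbx (τ⁻¹.injective h)⟩

theorem card_permsMaxAt_mul_card {S : Finset α} {a : α} (ha : a ∈ S) :
    #(permsMaxAt S a) * #S = Fintype.card (Perm α) := by
  have hdisj : (S : Set α).PairwiseDisjoint (permsMaxAt S) := by
    intro x hx y hy hxy
    refine disjoint_left.2 fun τ hτx hτy => ?_
    exact lt_asymm (mem_permsMaxAt.1 hτx y hy hxy.symm) (mem_permsMaxAt.1 hτy x hx hxy)
  rw [← card_univ, ← biUnion_permsMaxAt ⟨a, ha⟩, card_biUnion hdisj,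
    sum_congr rfl fun x hx => card_permsMaxAt_eq ha hx, sum_const, smul_eq_mul, mul_comm]

end Equiv.Perm

open Equiv Perm

theorem Fintype.sum_comp_le_sum_of_injective {ι β M : Type*} [Fintype ι] [Fintype β]
    [AddCommMonoid M] [PartialOrder M] [IsOrderedAddMonoid M] {e : ι → β}
    (he : Function.Injective e) {g : β → M} (hg : ∀ x, 0 ≤ g x) :
    ∑ i, g (e i) ≤ ∑ x, g x := by
  simpa using sum_le_univ_sum_of_nonneg (s := univ.map ⟨e, he⟩) hg

theorem Fintype.sum_sum_comp_le_sum_sum_of_injective {ι β M : Type*} [Fintype ι] [Fintype β]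
    [AddCommMonoid M] [PartialOrder M] [IsOrderedAddMonoid M] {e : ι → β}
    (he : Function.Injective e) {f : β → β → M} (hf : ∀ x y, 0 ≤ f x y) :
    ∑ i, ∑ j, f (e i) (e j) ≤ ∑ x, ∑ y, f x y :=
  calc ∑ i, ∑ j, f (e i) (e j) ≤ ∑ i, ∑ y, f (e i) y :=
        sum_le_sum fun i _ => Fintype.sum_comp_le_sum_of_injective he (hf (e i))
    _ ≤ ∑ x, ∑ y, f x y :=
        Fintype.sum_comp_le_sum_of_injective he (g := fun x => ∑ y, f x y) fun x =>
          Finset.sum_nonneg fun y _ => hf x y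

section Records

variable {n : ℕ}

theorem mem_RecSet_of_mem_permsMaxAt {π τ : Perm (Fin n)} {z a : Fin n} {S : Finset (Fin n)}
    (hza : π⁻¹ z ≤ π⁻¹ a) (hS : ∀ x, π⁻¹ z ≤ π⁻¹ x → π⁻¹ x ≤ π⁻¹ a → x ∈ S)
    (hτ : τ ∈ permsMaxAt S a) : a ∈ RecSet τ z π := by
  refine mem_filter.2 ⟨mem_univ a, hza, fun b hzb hba => ?_⟩
  exact mem_permsMaxAt.1 hτ b (hS b hzb hba.le) fun h => hba.ne (congrArg (⇑π⁻¹) h)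

theorem recHash_eq_of_mem_RecSet {τ π σ : Perm (Fin n)} {z a : Fin n}
    (hπ : a ∈ RecSet τ z π) (hσ : a ∈ RecSet τ z σ) : recHash τ z a π = recHash τ z a σ := by
  simp [recHash, hπ, hσ]

def collisionCount (π σ : Perm (Fin n)) (z a : Fin n) : ℕ :=
  #{τ | recHash τ z a π = recHash τ z a σ}

theorem recCollProb_eq_sum_collisionCount (π σ : Perm (Fin n)) :
    recCollProb π σ =
      (∑ z, ∑ a, (collisionCount π σ z a : ℝ)) / (Fintype.card (Perm (Fin n)) * n * n) := by
  rw [recCollProb, sum_comm]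
  simp_rw [sum_comm (γ := Perm (Fin n)), sum_boole, collisionCount]

theorem card_perm_le_card_mul_collisionCount {π σ : Perm (Fin n)} {z a : Fin n}
    {S : Finset (Fin n)} (haS : a ∈ S) (hzaπ : π⁻¹ z ≤ π⁻¹ a) (hzaσ : σ⁻¹ z ≤ σ⁻¹ a)
    (hSπ : ∀ x, π⁻¹ z ≤ π⁻¹ x → π⁻¹ x ≤ π⁻¹ a → x ∈ S)
    (hSσ : ∀ x, σ⁻¹ z ≤ σ⁻¹ x → σ⁻¹ x ≤ σ⁻¹ a → x ∈ S) :
    Fintype.card (Perm (Fin n)) ≤ #S * collisionCount π σ z a := by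
  rw [← card_permsMaxAt_mul_card haS, mul_comm]
  refine Nat.mul_le_mul_left _ (card_le_card fun τ hτ => mem_filter.2 ⟨mem_univ τ, ?_⟩)
  exact recHash_eq_of_mem_RecSet (mem_RecSet_of_mem_permsMaxAt hzaπ hSπ hτ)
    (mem_RecSet_of_mem_permsMaxAt hzaσ hSσ hτ)

theorem card_perm_div_le_collisionCount {L : ℕ} {π σ : Perm (Fin n)} {c : Fin L → Fin n}
    {i j : Fin L} (hπ : π⁻¹ (c i) ≤ π⁻¹ (c j)) (hσ : σ⁻¹ (c i) ≤ σ⁻¹ (c j)) :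
    (Fintype.card (Perm (Fin n)) : ℝ) / #(interval π c i j ∪ interval σ c i j) ≤
      collisionCount π σ (c i) (c j) := by
  have hmem : c j ∈ interval π c i j ∪ interval σ c i j :=
    mem_union_left _ (mem_filter.2 ⟨mem_univ _, hπ, le_rfl⟩)
  have hcard := card_perm_le_card_mul_collisionCount hmem hπ hσ
    (fun x h₁ h₂ => mem_union_left _ (mem_filter.2 ⟨mem_univ x, h₁, h₂⟩))
    (fun x h₁ h₂ => mem_union_right _ (mem_filter.2 ⟨mem_univ x, h₁, h₂⟩))
  rw [div_le_iff₀' (Nat.cast_pos.2 (card_pos.2 ⟨_, hmem⟩))]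
  exact_mod_cast hcard

end Records

theorem recCollProb_lower_bound_general {n L : ℕ} (π σ : Equiv.Perm (Fin n))
    (c : Fin L → Fin n)
    (hcπ : ∀ i j : Fin L, i < j → π⁻¹ (c i) < π⁻¹ (c j))
    (hcσ : ∀ i j : Fin L, i < j → σ⁻¹ (c i) < σ⁻¹ (c j)) :
    (1 / (n : ℝ) ^ 2) *
        (∑ i : Fin L, ∑ j : Fin L,
          if i < j then
            (1 : ℝ) / ((interval π c i j ∪ interval σ c i j).card : ℝ)
          else 0) ≤
      recCollProb π σ := by
  set N : ℝ := (Fintype.card (Perm (Fin n)) : ℝ)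
  have hN : N ≠ 0 := Nat.cast_ne_zero.2 Fintype.card_ne_zero
  have hc : Function.Injective c :=
    (StrictMono.injective (f := fun i => π⁻¹ (c i)) fun i j => hcπ i j).of_comp
  have hpair (i j : Fin L) :
      (if i < j then N * (1 / #(interval π c i j ∪ interval σ c i j)) else 0) ≤
        (collisionCount π σ (c i) (c j) : ℝ) := by
    split_ifs with hij
    · rw [mul_one_div]
      exact card_perm_div_le_collisionCount (hcπ i j hij).le (hcσ i j hij).le
    · positivity
  have hsum : N * (∑ i : Fin L, ∑ j : Fin L,
      if i < j then (1 : ℝ) / #(interval π c i j ∪ interval σ c i j) else 0) ≤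
        ∑ z, ∑ a, (collisionCount π σ z a : ℝ) := by
    simp_rw [mul_sum, mul_ite, mul_zero]
    exact (sum_le_sum fun i _ => sum_le_sum fun j _ => hpair i j).trans
      (Fintype.sum_sum_comp_le_sum_sum_of_injective hc fun z a => Nat.cast_nonneg _)
  rw [recCollProb_eq_sum_collisionCount]
  refine le_of_eq_of_le ?_ (div_le_div_of_nonneg_right hsum (by positivity))
  rw [mul_assoc N, mul_div_mul_left _ _ hN]
  ring

theorem recCollProb_lower_bound {n L : ℕ} (π σ : Equiv.Perm (Fin n))
    (hL : L = lcs π σ) (hL2 : 2 ≤ L) (c : Fin L → Fin n)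
    (hcπ : ∀ i j : Fin L, i < j → π⁻¹ (c i) < π⁻¹ (c j))
    (hcσ : ∀ i j : Fin L, i < j → σ⁻¹ (c i) < σ⁻¹ (c j)) :
    (1 / (n : ℝ) ^ 2) *
        (∑ i : Fin L, ∑ j : Fin L,
          if i < j then
            (1 : ℝ) / ((interval π c i j ∪ interval σ c i j).card : ℝ)
          else 0) ≤
      recCollProb π σ :=
  recCollProb_lower_bound_general π σ c hcπ hcσ
end
end

section
/- Let π, σ ∈ S_n with L := LCS(π,σ) ≥ 4 and let (c₁,...,c_L) be any longest common subsequence of π and σ, with W_{i,j} defined as above for 1 ≤ i < j ≤ L. Then Σ_{1 ≤ i < j ≤ L} 1/W_{i,j} ≥ L²·ln(L)/(32n). -/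
open scoped Classical
open Finset

noncomputable section

/-!
Write `p k`, `s k` for the positions of `c k` in `π` and `σ`. Since both are strictly increasing,
`W i j ≤ (p j - p i + 1) + (s j - s i + 1) ≤ a j - a i` with `a = 2 (p + s)` taking values in
`[0, 4n]`. For a gap `1 ≤ d ≤ L / 2` the sum of `a (i + d) - a i` over the `L - d ≥ L / 2` pairs
telescopes to at most `4 d n`, so by Cauchy–Schwarz the pairs at gap `d` contribute at least
`L² / (16 d n)`. Summing over `d` gives `L² H_{⌊L/2⌋} / (16 n)`, and `2 H_{⌊L/2⌋} ≥ log L`.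
-/

namespace Finset

theorem sum_range_shift_sub {G : Type*} [AddCommGroup G] (a : ℕ → G) (m d : ℕ) :
    ∑ i ∈ range m, (a (d + i) - a i) = ∑ i ∈ range d, (a (m + i) - a i) := by
  rw [sum_sub_distrib, sum_sub_distrib, sub_eq_sub_iff_add_eq_add, add_comm, ← sum_range_add,
    add_comm (∑ i ∈ range d, a (m + i)), ← sum_range_add, Nat.add_comm]

theorem sum_range_shift_sub_le {L d : ℕ} {B : ℝ} {a : ℕ → ℝ}
    (ha : ∀ k < L, 0 ≤ a k ∧ a k ≤ B) (hdL : d ≤ L) :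
    ∑ i ∈ range (L - d), (a (d + i) - a i) ≤ d * B := by
  rw [sum_range_shift_sub]
  calc ∑ i ∈ range d, (a (L - d + i) - a i) ≤ ∑ _i ∈ range d, B := by
        refine sum_le_sum fun i hi => ?_
        have hi : i < d := mem_range.mp hi
        linarith [(ha (L - d + i) (by omega)).2, (ha i (by omega)).1]
    _ = d * B := by simp

theorem sum_shifts_le_sum_pairs {M : Type*} [AddCommMonoid M] [PartialOrder M]
    [IsOrderedAddMonoid M] {L m : ℕ} (g : ℕ → ℕ → M)
    (hg : ∀ i j, i < j → j < L → 0 ≤ g i j) :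
    ∑ d ∈ Icc 1 m, ∑ i ∈ range (L - d), g i (d + i) ≤
      ∑ i ∈ range L, ∑ j ∈ range L, if i < j then g i j else 0 := by
  let φ : (Σ _ : ℕ, ℕ) → ℕ × ℕ := fun x => (x.2, x.1 + x.2)
  have hφ : Set.InjOn φ ((Icc 1 m).sigma fun d => range (L - d)) := by
    intro x _ y _ h
    simp only [φ, Prod.mk.injEq] at h
    exact Sigma.ext (by omega) (heq_of_eq h.1)
  calc ∑ d ∈ Icc 1 m, ∑ i ∈ range (L - d), g i (d + i)
      = ∑ p ∈ ((Icc 1 m).sigma fun d => range (L - d)).image φ, g p.1 p.2 := by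
        rw [sum_sigma', sum_image hφ]
    _ ≤ ∑ p ∈ (range L ×ˢ range L).filter (fun p => p.1 < p.2), g p.1 p.2 := by
        refine sum_le_sum_of_subset_of_nonneg ?_ fun p hp _ => ?_
        · intro p hp
          simp only [mem_image, mem_sigma, mem_Icc, mem_range, φ] at hp
          obtain ⟨x, ⟨hx₁, hx₂⟩, rfl⟩ := hp
          simp only [mem_filter, mem_product, mem_range]
          omega
        · simp only [mem_filter, mem_product, mem_range] at hp
          exact hg _ _ hp.2 hp.1.2
    _ = ∑ i ∈ range L, ∑ j ∈ range L, if i < j then g i j else 0 := by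
        rw [sum_filter]
        exact sum_product' _ _ fun i j => if i < j then g i j else 0

end Finset

open Finset

theorem log_le_two_mul_harmonic_half (L : ℕ) : Real.log L ≤ 2 * harmonic (L / 2) := by
  rcases Nat.eq_zero_or_pos L with rfl | hL
  · simp
  have hsq : (L : ℝ) ≤ ((L / 2 + 1 : ℕ) : ℝ) ^ 2 := by
    exact_mod_cast (by nlinarith [Nat.lt_div_mul_add (a := L) two_pos] : L ≤ (L / 2 + 1) ^ 2)
  calc Real.log L ≤ Real.log (((L / 2 + 1 : ℕ) : ℝ) ^ 2) := Real.log_le_log (by positivity) hsq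
    _ = 2 * Real.log (L / 2 + 1 : ℕ) := by rw [Real.log_pow, Nat.cast_ofNat]
    _ ≤ 2 * harmonic (L / 2) := by gcongr; exact log_add_one_le_harmonic _

section

variable {L : ℕ} {B : ℝ} {a : ℕ → ℝ} {w : ℕ → ℕ → ℝ}

theorem sq_div_le_sum_inv_shift (ha : ∀ k < L, 0 ≤ a k ∧ a k ≤ B)
    (hw : ∀ i j, i < j → j < L → 0 < w i j ∧ w i j ≤ a j - a i) {d : ℕ} (hd : 0 < d)
    (hdL : d < L) :
    ((L - d : ℕ) : ℝ) ^ 2 / (d * B) ≤ ∑ i ∈ range (L - d), 1 / w i (d + i) := by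
  have hw' : ∀ i ∈ range (L - d), 0 < w i (d + i) ∧ w i (d + i) ≤ a (d + i) - a i :=
    fun i hi => hw i (d + i) (by omega) (by have := mem_range.mp hi; omega)
  have hpos : ∀ i ∈ range (L - d), 0 < w i (d + i) := fun i hi => (hw' i hi).1
  have hsum_pos : 0 < ∑ i ∈ range (L - d), w i (d + i) :=
    sum_pos hpos ⟨0, mem_range.mpr (by omega)⟩
  have hsum_le : ∑ i ∈ range (L - d), w i (d + i) ≤ d * B :=
    (sum_le_sum fun i hi => (hw' i hi).2).trans (sum_range_shift_sub_le ha hdL.le)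
  calc ((L - d : ℕ) : ℝ) ^ 2 / (d * B)
      ≤ ((L - d : ℕ) : ℝ) ^ 2 / ∑ i ∈ range (L - d), w i (d + i) :=
        div_le_div_of_nonneg_left (by positivity) hsum_pos hsum_le
    _ = (∑ _i ∈ range (L - d), (1 : ℝ)) ^ 2 / ∑ i ∈ range (L - d), w i (d + i) := by simp
    _ ≤ ∑ i ∈ range (L - d), 1 ^ 2 / w i (d + i) := sq_sum_div_le_sum_sq_div _ _ hpos
    _ = ∑ i ∈ range (L - d), 1 / w i (d + i) := by simp

theorem sq_mul_log_div_le_sum_inv (ha : ∀ k < L, 0 ≤ a k ∧ a k ≤ B)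
    (hw : ∀ i j, i < j → j < L → 0 < w i j ∧ w i j ≤ a j - a i) :
    (L : ℝ) ^ 2 * Real.log L / (8 * B) ≤
      ∑ i ∈ range L, ∑ j ∈ range L, if i < j then 1 / w i j else 0 := by
  rcases Nat.eq_zero_or_pos L with rfl | hL
  · simp
  have hB : 0 ≤ B := (ha 0 hL).1.trans (ha 0 hL).2
  calc (L : ℝ) ^ 2 * Real.log L / (8 * B)
      ≤ (L : ℝ) ^ 2 / (4 * B) * harmonic (L / 2) := by
        rw [show (L : ℝ) ^ 2 * Real.log L / (8 * B) =
          (L : ℝ) ^ 2 / (4 * B) * (Real.log L / 2) by ring]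
        gcongr
        linarith [log_le_two_mul_harmonic_half L]
    _ = ∑ d ∈ Icc 1 (L / 2), (L : ℝ) ^ 2 / (4 * d * B) := by
        push_cast [harmonic_eq_sum_Icc]
        rw [mul_sum]
        refine sum_congr rfl fun d _ => ?_
        field_simp
    _ ≤ ∑ d ∈ Icc 1 (L / 2), ((L - d : ℕ) : ℝ) ^ 2 / (d * B) := by
        refine sum_le_sum fun d hd => ?_
        have hd : 1 ≤ d ∧ d ≤ L / 2 := mem_Icc.mp hd
        have hLd : (L : ℝ) ≤ 2 * ((L - d : ℕ) : ℝ) := by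
          exact_mod_cast (by omega : L ≤ 2 * (L - d))
        rw [show (4 * d * B : ℝ) = 4 * (d * B) by ring, ← div_div]
        gcongr
        nlinarith
    _ ≤ ∑ d ∈ Icc 1 (L / 2), ∑ i ∈ range (L - d), 1 / w i (d + i) :=
        sum_le_sum fun d hd => by
          obtain ⟨hd₁, hd₂⟩ := mem_Icc.mp hd
          exact sq_div_le_sum_inv_shift ha hw (by omega) (by omega)
    _ ≤ ∑ i ∈ range L, ∑ j ∈ range L, if i < j then 1 / w i j else 0 :=
        sum_shifts_le_sum_pairs _ fun i j hij hj => (one_div_pos.mpr (hw i j hij hj).1).le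

end

theorem sq_mul_log_div_le_sum_inv_fin {L : ℕ} {B : ℝ} (a : Fin L → ℝ) (w : Fin L → Fin L → ℝ)
    (ha : ∀ k, 0 ≤ a k ∧ a k ≤ B) (hw : ∀ i j, i < j → 0 < w i j ∧ w i j ≤ a j - a i) :
    (L : ℝ) ^ 2 * Real.log L / (8 * B) ≤ ∑ i, ∑ j, if i < j then 1 / w i j else 0 := by
  let a' : ℕ → ℝ := fun k => if h : k < L then a ⟨k, h⟩ else 0
  let w' : ℕ → ℕ → ℝ := fun i j => if h : i < L ∧ j < L then w ⟨i, h.1⟩ ⟨j, h.2⟩ else 0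
  have key := sq_mul_log_div_le_sum_inv (L := L) (B := B) (a := a') (w := w')
    (fun k hk => by simpa [a', hk] using ha ⟨k, hk⟩)
    fun i j hij hj => by
      simpa [a', w', hj, hij.trans hj, Fin.lt_def] using hw ⟨i, hij.trans hj⟩ ⟨j, hj⟩ hij
  convert key using 1
  rw [← Fin.sum_univ_eq_sum_range]
  refine sum_congr rfl fun i _ => ?_
  rw [← Fin.sum_univ_eq_sum_range]
  refine sum_congr rfl fun j _ => ?_
  simp [w']

theorem interval_eq_map {n L : ℕ} (π : Equiv.Perm (Fin n)) (c : Fin L → Fin n) (i j : Fin L) :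
    interval π c i j = (Icc (π⁻¹ (c i)) (π⁻¹ (c j))).map π.toEmbedding := by
  ext x
  simp [interval]

theorem card_interval {n L : ℕ} (π : Equiv.Perm (Fin n)) (c : Fin L → Fin n) (i j : Fin L) :
    #(interval π c i j) = π⁻¹ (c j) + 1 - π⁻¹ (c i) := by
  rw [interval_eq_map, card_map, Fin.card_Icc]

section

variable {n L : ℕ} (π σ : Equiv.Perm (Fin n)) (c : Fin L → Fin n) {i j : Fin L}

theorem card_interval_union_pos (h : π⁻¹ (c i) ≤ π⁻¹ (c j)) :
    0 < #(interval π c i j ∪ interval σ c i j) :=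
  card_pos.mpr ⟨c i, mem_union_left _ (mem_filter.mpr ⟨mem_univ _, le_rfl, h⟩)⟩

theorem card_interval_union_le (hπ : π⁻¹ (c i) < π⁻¹ (c j)) (hσ : σ⁻¹ (c i) < σ⁻¹ (c j)) :
    (#(interval π c i j ∪ interval σ c i j) : ℝ) ≤
      2 * (((π⁻¹ (c j) : ℕ) : ℝ) + (σ⁻¹ (c j) : ℕ)) -
        2 * (((π⁻¹ (c i) : ℕ) : ℝ) + (σ⁻¹ (c i) : ℕ)) := by
  have hunion := card_union_le (interval π c i j) (interval σ c i j)
  rw [card_interval, card_interval] at hunion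
  have hπ' : (π⁻¹ (c i) : ℕ) < π⁻¹ (c j) := hπ
  have hσ' : (σ⁻¹ (c i) : ℕ) < σ⁻¹ (c j) := hσ
  have hnat : #(interval π c i j ∪ interval σ c i j) + 2 * ((π⁻¹ (c i) : ℕ) + (σ⁻¹ (c i) : ℕ)) ≤
      2 * ((π⁻¹ (c j) : ℕ) + (σ⁻¹ (c j) : ℕ)) := by omega
  rw [le_sub_iff_add_le]
  exact_mod_cast hnat

end

theorem sum_inv_W_lower_bound_general {n L : ℕ} (π σ : Equiv.Perm (Fin n))
    (c : Fin L → Fin n)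
    (hcπ : ∀ i j : Fin L, i < j → π⁻¹ (c i) < π⁻¹ (c j))
    (hcσ : ∀ i j : Fin L, i < j → σ⁻¹ (c i) < σ⁻¹ (c j)) :
    (L : ℝ) ^ 2 * Real.log L / (32 * n) ≤
      ∑ i : Fin L, ∑ j : Fin L,
        if i < j then
          (1 : ℝ) / ((interval π c i j ∪ interval σ c i j).card : ℝ)
        else 0 := by
  have key := sq_mul_log_div_le_sum_inv_fin (B := 4 * n)
    (fun k => 2 * (((π⁻¹ (c k) : ℕ) : ℝ) + (σ⁻¹ (c k) : ℕ)))
    (fun i j => (#(interval π c i j ∪ interval σ c i j) : ℝ))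
    (fun k => by
      have hπ : ((π⁻¹ (c k) : ℕ) : ℝ) ≤ n := by exact_mod_cast (π⁻¹ (c k)).is_lt.le
      have hσ : ((σ⁻¹ (c k) : ℕ) : ℝ) ≤ n := by exact_mod_cast (σ⁻¹ (c k)).is_lt.le
      constructor
      · positivity
      · linarith)
    fun i j hij => ⟨by exact_mod_cast card_interval_union_pos π σ c (hcπ i j hij).le,
      card_interval_union_le π σ c (hcπ i j hij) (hcσ i j hij)⟩
  rwa [show (8 * (4 * n : ℝ)) = 32 * n by ring] at key

theorem sum_inv_W_lower_bound {n L : ℕ} (π σ : Equiv.Perm (Fin n))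
    (hL : L = lcs π σ) (hL4 : 4 ≤ L) (c : Fin L → Fin n)
    (hcπ : ∀ i j : Fin L, i < j → π⁻¹ (c i) < π⁻¹ (c j))
    (hcσ : ∀ i j : Fin L, i < j → σ⁻¹ (c i) < σ⁻¹ (c j)) :
    (L : ℝ) ^ 2 * Real.log L / (32 * n) ≤
      ∑ i : Fin L, ∑ j : Fin L,
        if i < j then
          (1 : ℝ) / ((interval π c i j ∪ interval σ c i j).card : ℝ)
        else 0 :=
  sum_inv_W_lower_bound_general π σ c hcπ hcσ
end
end

section
/- For π, σ ∈ S_n, define the wreath product π≀σ ∈ S_{n²} by (π≀σ)((i−1)·n + j) = (π(i)−1)·n + σ(j) for all i, j ∈ {1,...,n}. Then for all π, σ, τ₁, τ₂ ∈ S_n: LCS(π≀σ, τ₁≀τ₂) = LCS(π,τ₁) · LCS(σ,τ₂), where the LCS on the left is taken in S_{n²}. -/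
/-!
A common subsequence of `ρ` and `η`, read through its positions in `ρ`, is an increasing
subsequence of `η⁻¹ρ`; so `LCS(ρ, η) = lis(η⁻¹ρ)`. As `(τ₁ ≀ τ₂)⁻¹(π ≀ σ) = (τ₁⁻¹π) ≀ (τ₂⁻¹σ)`,
it remains to show `lis(α ≀ β) = lis α · lis β`. Identifying `Fin (n * n)` with `Fin n × Fin n`
ordered lexicographically, `α ≀ β` becomes `α × β`. The first coordinates of an increasing set
of pairs form an increasing set for `α` (here injectivity of `α` is used), and each fibre is
increasing for `β`, which bounds its size by `lis α · lis β`; conversely the product of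
increasing sets for `α` and `β` is increasing for `α × β`.
-/

open scoped Classical
open Finset

noncomputable section

/-- The wreath product `π ≀ σ ∈ S_{n²}`: under the identification
`finProdFinEquiv : Fin n × Fin n ≃ Fin (n * n)`, `(i, j) ↦ j + n * i` (i.e. block `i`,
position `j`), it sends `i * n + j ↦ π(i) * n + σ(j)`. -/
def wreath {n : ℕ} (π σ : Equiv.Perm (Fin n)) : Equiv.Perm (Fin (n * n)) :=
  finProdFinEquiv.symm.trans ((Equiv.prodCongr π σ).trans finProdFinEquiv)

/-- The defining formula of the wreath product. -/
theorem wreath_apply {n : ℕ} (π σ : Equiv.Perm (Fin n)) (i j : Fin n) :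
    wreath π σ (finProdFinEquiv (i, j)) = finProdFinEquiv (π i, σ j) := by
  simp [wreath]

theorem List.SortedLT.sortedLT_map_iff_strictMonoOn {α β : Type*} [LinearOrder α] [Preorder β]
    {L : List α} (hL : L.SortedLT) (φ : α → β) :
    (L.map φ).SortedLT ↔ StrictMonoOn φ {x | x ∈ L} := by
  constructor
  · intro hφ x hx y hy hxy
    obtain ⟨i, hi, rfl⟩ := List.mem_iff_getElem.1 hx
    obtain ⟨j, hj, rfl⟩ := List.mem_iff_getElem.1 hy
    have hij : i < j := by
      by_contra! h
      exact (lt_irrefl _ (hxy.trans_le (hL.sortedLE.getElem_le_getElem_of_le h)))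
    have := hφ.getElem_lt_getElem_of_lt (hi := by simpa) (hj := by simpa) hij
    rwa [List.getElem_map, List.getElem_map] at this
  · intro hφ
    exact List.sortedLT_iff_pairwise.2 <| List.pairwise_map.2 <|
      hL.pairwise.imp_of_mem fun ha hb hab => hφ ha hb hab

theorem sublist_finRange_iff {m : ℕ} {l : List (Fin m)} :
    l.Sublist (List.finRange m) ↔ l.SortedLT := by
  refine ⟨fun h => (List.sortedLT_finRange m).pairwise.sublist h |>.sortedLT, fun h => ?_⟩
  exact List.sublist_of_subperm_of_sortedLE
    (h.nodup.subperm fun x _ => List.mem_finRange x) h.sortedLE (List.sortedLT_finRange m).sortedLE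

theorem sublist_oneLine_iff {m : ℕ} {ρ : Equiv.Perm (Fin m)} {l : List (Fin m)} :
    l.Sublist (oneLine ρ) ↔ (l.map ρ.symm).SortedLT := by
  rw [← sublist_finRange_iff]
  constructor
  · intro h
    simpa [oneLine] using h.map ρ.symm
  · intro h
    simpa [oneLine] using h.map ρ

section LexProd

variable {α β γ δ : Type*} [Preorder α] [Preorder β] [Preorder γ] [Preorder δ]

theorem StrictMonoOn.lex_prodMap {f : α → β} {g : γ → δ} {A : Set α} {C : Set γ}
    (hf : StrictMonoOn f A) (hg : StrictMonoOn g C) :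
    StrictMonoOn (toLex ∘ Prod.map f g ∘ ofLex) (ofLex ⁻¹' A ×ˢ C) := by
  intro p hp q hq hpq
  simp only [Function.comp_apply, Prod.Lex.toLex_lt_toLex, Prod.map_fst, Prod.map_snd]
  rcases Prod.Lex.lt_iff.1 hpq with h | ⟨h, h₂⟩
  · exact Or.inl (hf hp.1 hq.1 h)
  · exact Or.inr ⟨congrArg f h, hg hp.2 hq.2 h₂⟩

variable {f : α → β} {g : γ → δ} {T : Set (α ×ₗ γ)}

theorem StrictMonoOn.image_fst_of_lex_prodMap (hf : Function.Injective f)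
    (hT : StrictMonoOn (toLex ∘ Prod.map f g ∘ ofLex) T) :
    StrictMonoOn f ((fun p => (ofLex p).1) '' T) := by
  rintro _ ⟨p, hp, rfl⟩ _ ⟨q, hq, rfl⟩ hpq
  rcases Prod.Lex.lt_iff.1 (hT hp hq (Prod.Lex.lt_iff.2 (Or.inl hpq))) with h | ⟨h, -⟩
  · exact h
  · exact absurd (hf h) hpq.ne

theorem StrictMonoOn.fiber_of_lex_prodMap (hT : StrictMonoOn (toLex ∘ Prod.map f g ∘ ofLex) T)
    (a : α) : StrictMonoOn g ((fun p => (ofLex p).2) '' {p ∈ T | (ofLex p).1 = a}) := by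
  rintro _ ⟨p, ⟨hp, rfl⟩, rfl⟩ _ ⟨q, ⟨hq, hpq₁⟩, rfl⟩ hpq
  rcases Prod.Lex.lt_iff.1 (hT hp hq (Prod.Lex.lt_iff.2 (Or.inr ⟨hpq₁.symm, hpq⟩))) with h | ⟨-, h⟩
  · simp [hpq₁] at h
  · exact h

end LexProd

section lis

variable {α β γ δ : Type*} [Fintype α] [Preorder α] [Preorder β]

def lis (f : α → β) : ℕ :=
  ({T | StrictMonoOn f (T : Set α)} : Finset (Finset α)).sup card

theorem card_le_lis {f : α → β} {T : Finset α} (hT : StrictMonoOn f (T : Set α)) :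
    #T ≤ lis f :=
  le_sup (f := card) (by simpa using hT)

theorem exists_strictMonoOn_card_eq_lis (f : α → β) :
    ∃ T : Finset α, StrictMonoOn f (T : Set α) ∧ #T = lis f := by
  obtain ⟨T, hT, hcard⟩ := exists_mem_eq_sup
    ({T | StrictMonoOn f (T : Set α)} : Finset (Finset α)) ⟨∅, by simp [StrictMonoOn]⟩ card
  exact ⟨T, by simpa using hT, hcard.symm⟩

theorem lis_le_lis_comp [Fintype γ] [Preorder γ] (f : α → β) (e : γ ≃o α) :
    lis f ≤ lis (f ∘ e) := by
  obtain ⟨T, hT, hcard⟩ := exists_strictMonoOn_card_eq_lis f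
  rw [← hcard, ← card_map e.symm.toEquiv.toEmbedding]
  refine card_le_lis fun x hx y hy hxy => ?_
  simp only [coe_map, Set.mem_image, mem_coe] at hx hy
  obtain ⟨x, hx, rfl⟩ := hx
  obtain ⟨y, hy, rfl⟩ := hy
  simpa using hT hx hy (by simpa using hxy)

theorem lis_comp_orderIso [Fintype γ] [Preorder γ] (f : α → β) (e : γ ≃o α) :
    lis (f ∘ e) = lis f :=
  le_antisymm (by simpa [Function.comp_def] using lis_le_lis_comp (f ∘ e) e.symm)
    (lis_le_lis_comp f e)

theorem lis_orderIso_comp [Preorder δ] (e : β ≃o δ) (f : α → β) : lis (e ∘ f) = lis f := by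
  simp only [lis, StrictMonoOn, Function.comp_apply, e.lt_iff_lt]

theorem lis_lex_prodMap [Fintype γ] [Preorder γ] [Preorder δ] {f : α → β}
    (hf : Function.Injective f) (g : γ → δ) :
    lis (toLex ∘ Prod.map f g ∘ ofLex) = lis f * lis g := by
  refine le_antisymm ?_ ?_
  · obtain ⟨T, hT, hcard⟩ := exists_strictMonoOn_card_eq_lis (toLex ∘ Prod.map f g ∘ ofLex)
    have fiber_le (a : α) : #{p ∈ T | (ofLex p).1 = a} ≤ lis g := by
      rw [← card_image_of_injOn (f := fun p => (ofLex p).2)]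
      · exact card_le_lis (by simpa using hT.fiber_of_lex_prodMap a)
      · intro p hp q hq h
        rw [coe_filter] at hp hq
        exact Prod.ext (hp.2.trans hq.2.symm) h
    calc lis (toLex ∘ Prod.map f g ∘ ofLex) = #T := hcard.symm
      _ ≤ lis g * #(T.image fun p => (ofLex p).1) :=
          card_le_mul_card_image T _ fun a _ => fiber_le a
      _ ≤ lis f * lis g := by
        rw [mul_comm]
        exact Nat.mul_le_mul_right _ (card_le_lis (by simpa using hT.image_fst_of_lex_prodMap hf))
  · obtain ⟨A, hA, hAcard⟩ := exists_strictMonoOn_card_eq_lis f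
    obtain ⟨C, hC, hCcard⟩ := exists_strictMonoOn_card_eq_lis g
    calc lis f * lis g = #((A ×ˢ C).map toLex.toEmbedding) := by simp [hAcard, hCcard]
      _ ≤ lis (toLex ∘ Prod.map f g ∘ ofLex) := by
        refine card_le_lis ?_
        convert hA.lex_prodMap hC
        ext p
        simp

end lis

theorem lcs_eq_lis {m : ℕ} (ρ η : Equiv.Perm (Fin m)) : lcs ρ η = lis (η.symm * ρ) := by
  have common_iff {l : List (Fin m)} : l.Sublist (oneLine ρ) ∧ l.Sublist (oneLine η) ↔
      (l.map ρ.symm).SortedLT ∧ StrictMonoOn (η.symm * ρ) {x | x ∈ l.map ρ.symm} := by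
    rw [sublist_oneLine_iff, sublist_oneLine_iff, and_congr_right_iff]
    intro h
    rw [← h.sortedLT_map_iff_strictMonoOn, List.map_map]
    simp [Function.comp_def]
  have le_lis : ∀ k ∈ {k | ∃ l : List (Fin m), l.Sublist (oneLine ρ) ∧ l.Sublist (oneLine η) ∧
      l.length = k}, k ≤ lis (η.symm * ρ) := by
    rintro k ⟨l, h₁, h₂, rfl⟩
    obtain ⟨hsorted, hmono⟩ := common_iff.1 ⟨h₁, h₂⟩
    have := card_le_lis (T := (l.map ρ.symm).toFinset) (by simpa using hmono)
    rwa [List.toFinset_card_of_nodup hsorted.nodup, List.length_map] at this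
  refine le_antisymm (csSup_le ⟨0, [], by simp⟩ le_lis) (le_csSup ⟨_, le_lis⟩ ?_)
  obtain ⟨T, hT, hcard⟩ := exists_strictMonoOn_card_eq_lis (η.symm * ρ)
  refine ⟨(T.sort).map ρ, common_iff.2 ?_ |>.1, common_iff.2 ?_ |>.2, by simpa using hcard⟩
  all_goals simpa [List.map_map, Function.comp_def] using ⟨T.sortedLT_sort, hT⟩

theorem strictMono_finProdFinEquiv_ofLex {m n : ℕ} :
    StrictMono fun p : Fin m ×ₗ Fin n => finProdFinEquiv (ofLex p) := by
  intro p q hpq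
  rw [Fin.lt_def, finProdFinEquiv_apply_val, finProdFinEquiv_apply_val]
  rcases Prod.Lex.lt_iff.1 hpq with h | ⟨h, h₂⟩
  · calc ((ofLex p).2 : ℕ) + n * (ofLex p).1 < n * ((ofLex p).1 + 1) := by
          rw [Nat.mul_succ]; omega
      _ ≤ (ofLex q).2 + n * (ofLex q).1 := by
          have : n * ((ofLex p).1 + 1 : ℕ) ≤ n * (ofLex q).1 := Nat.mul_le_mul_left n h
          omega
  · rw [h]; exact Nat.add_lt_add_right h₂ _

def finProdFinLexOrderIso (m n : ℕ) : Fin m ×ₗ Fin n ≃o Fin (m * n) :=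
  StrictMono.orderIsoOfSurjective _ strictMono_finProdFinEquiv_ofLex
    (finProdFinEquiv.surjective.comp ofLex.surjective)

theorem wreath_mul {n : ℕ} (π σ π' σ' : Equiv.Perm (Fin n)) :
    wreath π σ * wreath π' σ' = wreath (π * π') (σ * σ') := by
  ext x
  simp [wreath]

theorem wreath_symm {n : ℕ} (π σ : Equiv.Perm (Fin n)) :
    (wreath π σ).symm = wreath π.symm σ.symm := by
  ext x
  simp [wreath]

theorem coe_wreath {n : ℕ} (π σ : Equiv.Perm (Fin n)) :
    ⇑(wreath π σ) = finProdFinLexOrderIso n n ∘ (toLex ∘ Prod.map π σ ∘ ofLex) ∘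
      (finProdFinLexOrderIso n n).symm := by
  ext x
  obtain ⟨p, rfl⟩ := (finProdFinLexOrderIso n n).surjective x
  simp [finProdFinLexOrderIso, wreath]

theorem lis_wreath {n : ℕ} (π σ : Equiv.Perm (Fin n)) : lis (wreath π σ) = lis π * lis σ := by
  rw [coe_wreath, lis_orderIso_comp, lis_comp_orderIso, lis_lex_prodMap π.injective]

theorem lcs_wreath {n : ℕ} (π σ τ₁ τ₂ : Equiv.Perm (Fin n)) :
    lcs (wreath π σ) (wreath τ₁ τ₂) = lcs π τ₁ * lcs σ τ₂ := by
  rw [lcs_eq_lis, lcs_eq_lis, lcs_eq_lis, wreath_symm, wreath_mul, lis_wreath]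
end
end

section
/- Suppose there exists a probability distribution H over functions from S_n to a finite set Y that Δ-approximates (S_n, S^C). Then there exists a probability distribution H' over functions from S_n to a finite set that Δ-approximates (S_n, S^C) and whose collision kernel P_{H'}(π,σ) = Pr_{h'∼H'}[h'(π)=h'(σ)] is bi-invariant, i.e., P_{H'}(τ₁πτ₂, τ₁στ₂) = P_{H'}(π,σ) for all π,σ,τ₁,τ₂ ∈ S_n. -/
open scoped Classical
open Finset

noncomputable section

/-- The number of cycles of a permutation, counting fixed points as cycles of length 1
(so that the identity of `Fin n` has `n` cycles). -/
def cycleCount {n : ℕ} (π : Equiv.Perm (Fin n)) : ℕ :=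
  π.cycleType.card + (n - π.support.card)

/-- The (normalized) Cayley similarity `S^C(π,σ) = c(πσ⁻¹)/n`. -/
def cayleySim {n : ℕ} (π σ : Equiv.Perm (Fin n)) : ℝ := (cycleCount (π * σ⁻¹) : ℝ) / n

def collProb {X Y : Type*} [Fintype X] [Fintype Y] (w : (X → Y) → ℝ) (x₁ x₂ : X) : ℝ :=
  ∑ h : X → Y, if h x₁ = h x₂ then w h else 0

def IsDist {α : Type*} [Fintype α] (w : α → ℝ) : Prop :=
  (∀ a, 0 ≤ w a) ∧ ∑ a, w a = 1

/-!
Average the hash distribution over the action `π ↦ τ₁ * π * τ₂` of `S_n × S_n`: the collision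
probability of a pair under the average is the mean of the original collision probabilities of its
translates. The Cayley similarity is constant on translates, because `(τ₁πτ₂)(τ₁στ₂)⁻¹` is conjugate
to `πσ⁻¹`, so both approximation bounds pass to the mean, while the averaged kernel is invariant by
construction.
-/

open scoped BigOperators

section Averaging

variable {X Y : Type*} [Fintype X] [Fintype Y]

def Approximates (Δ : ℝ) (S : X → X → ℝ) (w : (X → Y) → ℝ) : Prop :=
  ∀ x y, S x y / Δ ≤ collProb w x y ∧ collProb w x y ≤ S x y

lemma sum_precomp_symm [DecidableEq X] (w : (X → Y) → ℝ) (e : X ≃ X) :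
    ∑ h : X → Y, w (h ∘ e.symm) = ∑ h, w h :=
  Equiv.sum_comp (e.arrowCongr (Equiv.refl Y)) w

lemma collProb_precomp_symm (w : (X → Y) → ℝ) (e : X ≃ X) (x y : X) :
    collProb (fun h => w (h ∘ e.symm)) x y = collProb w (e x) (e y) := by
  unfold collProb
  rw [← Equiv.sum_comp (e.symm.arrowCongr (Equiv.refl Y))]
  simp [Equiv.arrowCongr, Function.comp_def]

lemma collProb_expect {ι : Type*} [Fintype ι] (w : ι → (X → Y) → ℝ) (x y : X) :
    collProb (fun h => 𝔼 i, w i h) x y = 𝔼 i, collProb (w i) x y := by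
  refine (Finset.sum_congr rfl fun h _ => ?_).trans (Finset.expect_sum_comm _ _ _).symm
  split_ifs <;> simp

variable (G : Type*) [Group G] [Fintype G] [MulAction G X]

def groupAverage (w : (X → Y) → ℝ) (h : X → Y) : ℝ :=
  𝔼 g : G, w (h ∘ (g⁻¹ • ·))

variable {G}

lemma collProb_groupAverage (w : (X → Y) → ℝ) (x y : X) :
    collProb (groupAverage G w) x y = 𝔼 g : G, collProb w (g • x) (g • y) := by
  refine (collProb_expect _ x y).trans ?_
  exact Finset.expect_congr rfl fun g _ => collProb_precomp_symm w (MulAction.toPerm g) x y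

lemma collProb_groupAverage_smul (w : (X → Y) → ℝ) (a : G) (x y : X) :
    collProb (groupAverage G w) (a • x) (a • y) = collProb (groupAverage G w) x y := by
  simp only [collProb_groupAverage, smul_smul]
  exact Fintype.expect_equiv (Equiv.mulRight a) _ _ fun _ => rfl

-- The `Fintype (X → Y)` behind `IsDist` comes from a `DecidableEq X` instance, which for
-- `Perm (Fin n)` is not the classical one built into `collProb`; hence the explicit binder.
lemma IsDist.groupAverage [DecidableEq X] {w : (X → Y) → ℝ} (hw : IsDist w) :
    IsDist (groupAverage G w) := by
  refine ⟨fun h => Finset.expect_nonneg fun g _ => hw.1 _, ?_⟩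
  calc ∑ h, _root_.groupAverage G w h = 𝔼 g : G, ∑ h : X → Y, w (h ∘ (g⁻¹ • ·)) :=
        (Finset.expect_sum_comm _ _ _).symm
    _ = 𝔼 _g : G, (1 : ℝ) :=
        Finset.expect_congr rfl fun g _ => (sum_precomp_symm w (MulAction.toPerm g)).trans hw.2
    _ = 1 := Fintype.expect_const 1

lemma Approximates.groupAverage {Δ : ℝ} {S : X → X → ℝ} {w : (X → Y) → ℝ}
    (hS : ∀ (g : G) x y, S (g • x) (g • y) = S x y) (hw : Approximates Δ S w) :
    Approximates Δ S (groupAverage G w) := by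
  intro x y
  rw [collProb_groupAverage]
  constructor
  · exact Finset.le_expect univ_nonempty fun g _ => hS g x y ▸ (hw _ _).1
  · exact Finset.expect_le univ_nonempty fun g _ => hS g x y ▸ (hw _ _).2

end Averaging

lemma cycleCount_conj {n : ℕ} (τ π : Equiv.Perm (Fin n)) :
    cycleCount (τ * π * τ⁻¹) = cycleCount π := by
  rw [cycleCount, cycleCount, Equiv.Perm.cycleType_conj, Equiv.Perm.card_support_conj]

lemma cayleySim_mul_mul {n : ℕ} (π σ τ₁ τ₂ : Equiv.Perm (Fin n)) :
    cayleySim (τ₁ * π * τ₂) (τ₁ * σ * τ₂) = cayleySim π σ := by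
  have : τ₁ * π * τ₂ * (τ₁ * σ * τ₂)⁻¹ = τ₁ * (π * σ⁻¹) * τ₁⁻¹ := by group
  rw [cayleySim, cayleySim, this, cycleCount_conj]

/-- If some distribution `Δ`-approximates the Cayley similarity, then there is a `Δ`-approximating
distribution whose collision kernel is bi-invariant. -/
theorem exists_biinvariant_approx (n : ℕ) (Δ : ℝ)
    (Y : Type) [Fintype Y] (w : (Equiv.Perm (Fin n) → Y) → ℝ) (hw : IsDist w)
    (happrox : ∀ π σ : Equiv.Perm (Fin n),
      cayleySim π σ / Δ ≤ collProb w π σ ∧ collProb w π σ ≤ cayleySim π σ) :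
    ∃ (Y' : Type) (_ : Fintype Y') (w' : (Equiv.Perm (Fin n) → Y') → ℝ),
      IsDist w' ∧
      (∀ π σ : Equiv.Perm (Fin n),
        cayleySim π σ / Δ ≤ collProb w' π σ ∧ collProb w' π σ ≤ cayleySim π σ) ∧
      (∀ π σ τ₁ τ₂ : Equiv.Perm (Fin n),
        collProb w' (τ₁ * π * τ₂) (τ₁ * σ * τ₂) = collProb w' π σ) := by
  let P := Equiv.Perm (Fin n)
  let : Fintype Pᵐᵒᵖ := Fintype.ofEquiv P MulOpposite.opEquiv
  let : MulAction (P × Pᵐᵒᵖ) P := MulAction.prodOfSMulCommClass P Pᵐᵒᵖ P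
  have smul_eq (τ₁ τ₂ π : P) : (τ₁, MulOpposite.op τ₂) • π = τ₁ * π * τ₂ :=
    (mul_assoc τ₁ π τ₂).symm
  have hS (g : P × Pᵐᵒᵖ) (π σ : P) : cayleySim (g • π) (g • σ) = cayleySim π σ :=
    cayleySim_mul_mul π σ g.1 g.2.unop
  refine ⟨Y, inferInstance, groupAverage (P × Pᵐᵒᵖ) w, hw.groupAverage,
    Approximates.groupAverage hS happrox, fun π σ τ₁ τ₂ => ?_⟩
  rw [← smul_eq, ← smul_eq]
  exact collProb_groupAverage_smul w _ π σ
end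
end

section
/- Let λ = (λ₁,...,λ_k) be a partition of n (λ₁ ≥ λ₂ ≥ ... ≥ λ_k ≥ 1, Σλ_i = n) with λ₁ ≥ (11/12)·n and γ := n − λ₁ ≥ 1. For a cell (i,j) of the Young diagram of λ (1 ≤ i ≤ k, 1 ≤ j ≤ λ_i), the hook length is h_λ(i,j) = (λ_i − j) + (λ'_j − i) + 1, where λ' is the transpose partition (λ'_j = |{ i : λ_i ≥ j }|). Then n! / Π_{(i,j)} h_λ(i,j) ≥ (n/(2γ))^γ. (By the hook length formula, the left-hand side equals the dimension d_λ of the irreducible representation S^λ of S_n, so d_λ ≥ (n/(2(n−λ₁)))^{n−λ₁}.) -/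
open Finset
open scoped Nat

/-! The hooks outside the first row lie in the `γ` cells below it, so each is at most `γ` and
together they contribute at most `γ ^ γ`. In the first row, the hook in column `j` is at most
`n - j`, and beyond column `γ` (past every other row) it is exactly `λ₁ - j`; hence the first row
contributes at most `n!/λ₁! · (λ₁ - γ)!`. Since `(λ₁ - γ)! (λ₁ - γ + 1)^γ ≤ λ₁!`, this gives
`n! / ∏ h ≥ ((λ₁ - γ + 1)/γ)^γ`, and `λ₁ - γ + 1 ≥ n/2` because `γ ≤ n/12`. -/

section Hooks

variable {k : ℕ} (lam : Fin k → ℕ)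

/-- Columns are indexed from `0`, here and in `hookLength`. -/
def colLen (j : ℕ) : ℕ := #{i | j < lam i}

def hookLength (i : Fin k) (j : ℕ) : ℕ := (lam i - (j + 1)) + (colLen lam j - (i + 1)) + 1

def hookProduct : ℕ := ∏ i, ∏ j ∈ range (lam i), hookLength lam i j

variable {lam}

theorem colLen_le (j : ℕ) : colLen lam j ≤ k := by
  simpa [colLen] using card_filter_le (univ : Finset (Fin k)) _

theorem lt_colLen (hlam : Antitone lam) {i : Fin k} {j : ℕ} (hj : j < lam i) :
    (i : ℕ) < colLen lam j := by
  have hsub : Iic i ⊆ univ.filter (fun i' ↦ j < lam i') := fun i' hi' ↦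
    mem_filter.mpr ⟨mem_univ _, hj.trans_le (hlam (mem_Iic.mp hi'))⟩
  simpa [colLen] using card_le_card hsub

theorem cast_hookLength {R : Type*} [CommRing R] (hlam : Antitone lam) {i : Fin k} {j : ℕ}
    (hj : j < lam i) :
    (hookLength lam i j : R) = ((lam i : R) - (j + 1)) + ((colLen lam j : R) - (i + 1)) + 1 := by
  have hi := lt_colLen hlam hj
  rw [hookLength]
  push_cast [Nat.cast_sub (Nat.succ_le_of_lt hj), Nat.cast_sub (Nat.succ_le_of_lt hi)]
  ring

theorem cast_hookProduct {R : Type*} [CommRing R] (hlam : Antitone lam) :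
    (hookProduct lam : R) = ∏ i, ∏ j ∈ range (lam i),
      (((lam i : R) - (j + 1)) + ((colLen lam j : R) - (i + 1)) + 1) := by
  push_cast [hookProduct]
  exact prod_congr rfl fun i _ ↦ prod_congr rfl fun j hj ↦ cast_hookLength hlam (mem_range.mp hj)

theorem hookProduct_pos : 0 < hookProduct lam :=
  prod_pos fun _ _ ↦ prod_pos fun _ _ ↦ Nat.succ_pos _

theorem hookLength_add_le_sum_Ici (hpos : ∀ i, 0 < lam i) {i : Fin k} {j : ℕ} (hj : j < lam i) :
    hookLength lam i j + j ≤ ∑ i' ∈ Ici i, lam i' := by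
  have hbelow : #(Ioi i) ≤ ∑ i' ∈ Ioi i, lam i' := by
    simpa using card_nsmul_le_sum (Ioi i) lam 1 fun i' _ ↦ hpos i'
  rw [Fin.card_Ioi] at hbelow
  rw [← add_sum_Ioi_eq_sum_Ici, hookLength]
  have := colLen_le (lam := lam) j
  have := i.isLt
  omega

end Hooks

section FirstRow

variable {k : ℕ} {lam : Fin (k + 1) → ℕ}

theorem sum_Ici_le_sum_sub_of_ne_zero {i : Fin (k + 1)} (hi : i ≠ 0) :
    ∑ i' ∈ Ici i, lam i' ≤ ∑ i', lam i' - lam 0 := by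
  have hsub : Ici i ⊆ univ.erase 0 := fun i' hi' ↦
    mem_erase.mpr ⟨fun h ↦ hi (le_antisymm (h ▸ mem_Ici.mp hi') (Fin.zero_le i)), mem_univ _⟩
  rw [← add_sum_erase univ lam (mem_univ 0), add_tsub_cancel_left]
  exact sum_le_sum_of_subset hsub

theorem le_sum_sub_of_ne_zero {i : Fin (k + 1)} (hi : i ≠ 0) : lam i ≤ ∑ i', lam i' - lam 0 :=
  (single_le_sum (fun _ _ ↦ Nat.zero_le _) (mem_Ici.mpr le_rfl)).trans
    (sum_Ici_le_sum_sub_of_ne_zero hi)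

theorem colLen_eq_one {g j : ℕ} (hrest : ∀ i ≠ 0, lam i ≤ g) (hgj : g ≤ j) (hj : j < lam 0) :
    colLen lam j = 1 := by
  rw [colLen, card_eq_one]
  refine ⟨0, eq_singleton_iff_unique_mem.mpr ⟨mem_filter.mpr ⟨mem_univ _, hj⟩, fun i hi ↦ ?_⟩⟩
  by_contra h0
  have := hrest i h0
  have := (mem_filter.mp hi).2
  omega

theorem prod_Ico_sub_eq_factorial (g m : ℕ) : ∏ j ∈ Ico g m, (m - j) = (m - g)! := by
  rcases le_total g m with hgm | hmg
  · rw [prod_Ico_reflect (fun j ↦ j) g (Nat.le_succ m), Nat.add_sub_cancel_left, Nat.succ_sub hgm]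
    exact prod_Ico_id_eq_factorial _
  · simp [hmg]

theorem prod_hookLength_zero_le (hpos : ∀ i, 0 < lam i) {g : ℕ} (hg : g ≤ lam 0)
    (hrest : ∀ i ≠ 0, lam i ≤ g) :
    ∏ j ∈ range (lam 0), hookLength lam 0 j ≤ (∑ i, lam i).descFactorial g * (lam 0 - g)! := by
  rw [← prod_range_mul_prod_Ico _ hg, Nat.descFactorial_eq_prod_range, ← prod_Ico_sub_eq_factorial]
  refine Nat.mul_le_mul (prod_le_prod' fun j hj ↦ ?_) (prod_le_prod' fun j hj ↦ ?_)
  · have := hookLength_add_le_sum_Ici hpos (lt_of_lt_of_le (mem_range.mp hj) hg)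
    rw [show Ici (0 : Fin (k + 1)) = univ by ext; simp] at this
    omega
  · obtain ⟨hgj, hj⟩ := mem_Ico.mp hj
    rw [hookLength, colLen_eq_one hrest hgj hj]
    omega

theorem hookProduct_mul_pow_le (hpos : ∀ i, 0 < lam i) {γ : ℕ} (hγ : γ ≤ lam 0)
    (hsum : ∑ i, lam i = lam 0 + γ) :
    hookProduct lam * (lam 0 - γ + 1) ^ γ ≤ (lam 0 + γ)! * γ ^ γ := by
  have hγ_eq : ∑ i, lam i - lam 0 = γ := by omega
  have hrest : ∀ i ≠ 0, lam i ≤ γ := fun i hi ↦ hγ_eq ▸ le_sum_sub_of_ne_zero hi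
  have hfirst : (∏ j ∈ range (lam 0), hookLength lam 0 j) * (lam 0 - γ + 1) ^ γ ≤ (lam 0 + γ)! :=
    calc _ ≤ (lam 0 + γ).descFactorial γ * (lam 0 - γ)! * (lam 0 - γ + 1) ^ γ :=
          Nat.mul_le_mul_right _ (hsum ▸ prod_hookLength_zero_le hpos hγ hrest)
      _ ≤ (lam 0 + γ).descFactorial γ * (lam 0)! := by
          rw [mul_assoc]
          refine Nat.mul_le_mul_left _ ?_
          simpa [Nat.sub_add_cancel hγ] using
            Nat.factorial_mul_pow_le_factorial (m := lam 0 - γ) (n := γ)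
      _ = (lam 0 + γ)! := by
          simpa [mul_comm] using Nat.factorial_mul_descFactorial (Nat.le_add_left γ (lam 0))
  have hothers : ∏ i : Fin k, ∏ j ∈ range (lam i.succ), hookLength lam i.succ j ≤ γ ^ γ :=
    calc _ ≤ ∏ i : Fin k, γ ^ lam i.succ := by
          refine prod_le_prod' fun i _ ↦ ?_
          simpa using prod_le_pow_card _ _ γ fun j hj ↦
            (Nat.le_add_right _ j).trans <|
              (hookLength_add_le_sum_Ici hpos (mem_range.mp hj)).trans <| hγ_eq ▸ sum_Ici_le_sum_sub_of_ne_zero (Fin.succ_ne_zero i)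
      _ = γ ^ γ := by
          rw [Fin.sum_univ_succ] at hsum
          rw [prod_pow_eq_pow_sum, Nat.add_left_cancel hsum]
  rw [hookProduct, Fin.prod_univ_succ]
  calc _ = ((∏ j ∈ range (lam 0), hookLength lam 0 j) * (lam 0 - γ + 1) ^ γ) *
        ∏ i : Fin k, ∏ j ∈ range (lam i.succ), hookLength lam i.succ j := by ring
    _ ≤ _ := Nat.mul_le_mul hfirst hothers

end FirstRow

theorem pow_le_div_of_mul_pow_le {K : Type*} [Field K] [LinearOrder K] [IsStrictOrderedRing K]
    {x b c N H : K} {m : ℕ} (hx : 0 ≤ x) (hxc : x * c ≤ b) (hc : 0 < c) (hH : 0 < H)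
    (h : H * b ^ m ≤ N * c ^ m) : x ^ m ≤ N / H := by
  rw [le_div_iff₀ hH]
  refine le_of_mul_le_mul_right ?_ (pow_pos hc m)
  calc x ^ m * H * c ^ m = H * (x * c) ^ m := by ring
    _ ≤ H * b ^ m := by gcongr
    _ ≤ N * c ^ m := h

/-- Hook-length lower bound on the dimension of the irreducible representation `S^λ`:
for a partition `λ = (λ₁,…,λ_k)` of `n` with `λ₁ ≥ (11/12)·n` and `γ := n − λ₁ ≥ 1`,
`n! / Π_{(i,j)} h_λ(i,j) ≥ (n/(2γ))^γ`, where `h_λ(i,j) = (λ_i − j) + (λ'_j − i) + 1`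
(cells indexed here with row `i : Fin k` and zero-based column `j < λ_i`, so the
one-based column index is `j + 1`, and `λ'_j = |{i : λ_i ≥ j}|`). -/
theorem hook_length_dimension_lower_bound (n k : ℕ) (hk : 0 < k) (lam : Fin k → ℕ)
    (hpos : ∀ i, 0 < lam i)
    (hmono : ∀ i j : Fin k, i ≤ j → lam j ≤ lam i)
    (hsum : ∑ i, lam i = n)
    (hlam1 : (11 : ℝ) / 12 * n ≤ (lam ⟨0, hk⟩ : ℝ))
    (hγ : 1 ≤ n - lam ⟨0, hk⟩) :
    ((n : ℝ) / (2 * ((n : ℝ) - (lam ⟨0, hk⟩ : ℝ)))) ^ (n - lam ⟨0, hk⟩) ≤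
      (n.factorial : ℝ) /
        ∏ i : Fin k, ∏ j ∈ Finset.range (lam i),
          (((lam i : ℝ) - (j + 1)) +
            (((Finset.univ.filter fun i' : Fin k => j + 1 ≤ lam i').card : ℝ) - (i.1 + 1)) +
            1) := by
  obtain ⟨k, rfl⟩ : ∃ m, k = m + 1 := ⟨k - 1, by omega⟩
  change (11 : ℝ) / 12 * n ≤ (lam 0 : ℝ) at hlam1
  change 1 ≤ n - lam 0 at hγ
  change ((n : ℝ) / (2 * ((n : ℝ) - (lam 0 : ℝ)))) ^ (n - lam 0) ≤
    (n.factorial : ℝ) / ∏ i : Fin (k + 1), ∏ j ∈ range (lam i),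
      (((lam i : ℝ) - (j + 1)) + ((colLen lam j : ℝ) - (i.1 + 1)) + 1)
  set γ := n - lam 0 with hγ_def
  have hγR : (γ : ℝ) = n - lam 0 := by rw [hγ_def, Nat.cast_sub (by omega)]
  have hγ_le : γ ≤ lam 0 := by
    suffices (γ : ℝ) ≤ lam 0 by exact_mod_cast this
    linarith
  have hnat := hookProduct_mul_pow_le hpos hγ_le (by omega)
  rw [← cast_hookProduct hmono, ← hγR]
  refine pow_le_div_of_mul_pow_le (b := ((lam 0 - γ + 1 : ℕ) : ℝ)) (by positivity) ?_
    (Nat.cast_pos.mpr hγ) (Nat.cast_pos.mpr hookProduct_pos) ?_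
  · rw [div_mul_eq_mul_div, mul_div_mul_right _ _ (by positivity : (γ : ℝ) ≠ 0),
      Nat.cast_add, Nat.cast_sub hγ_le]
    push_cast
    linarith
  · rw [show lam 0 + γ = n by omega] at hnat
    exact_mod_cast hnat
end
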